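/- arXiv:2109.01131 — 3 statements merged into one kernel-verified Lean document; each statement's English description precedes it below -/
import Mathlib

section
/- Quantifier elimination for Skolem arithmetic (semantic form over the standard model): for every L-formula φ(v₁,…,vₙ) there exist k ∈ ℕ, L-formulas θ₁,…,θ_k each with n free variables, natural numbers m₁,…,m_k, and a Boolean function B : {0,1}^k → {0,1}, such that for every tuple ā ∈ (ℕ⁺)ⁿ the following are equivalent: (a) ℕ⁺ ⊨ φ(ā); (b) B(t₁,…,t_k) = 1, where tᵢ = 1 exactly when there exists a finite set S of prime numbers with |S| = mᵢ such that for every p ∈ S the additive L-structure (ℕ,+,0) satisfies θᵢ at the tuple (v_p(a₁),…,v_p(aₙ)). -/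
open FirstOrder Language

/-- The language `L` with one binary function symbol `·` and one constant symbol `1`. -/
def L : FirstOrder.Language :=
  ⟨fun n => match n with | 0 => Unit | 2 => Unit | _ => Empty, fun _ => Empty⟩

/-- Any monoid is an `L`-structure, with `·` interpreted as multiplication and `1` as the
identity. In particular `ℕ+` is the standard model of Skolem arithmetic, and
`Multiplicative ℕ` is the additive `L`-structure `(ℕ, +, 0)`. -/
instance (M : Type*) [Monoid M] : L.Structure M where
  funMap {n} f x :=
    match n, f, x with
    | 0, _, _ => 1
    | 2, _, x => x 0 * x 1
  RelMap r _ := r.elim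

/-!
`a ↦ (v_p(a))_p` identifies `ℕ+` with the weak direct power of `(ℕ, +, 0)` over the primes, and
the theorem is the Feferman–Vaught theorem for this power. By induction on formulas, the truth
of a formula at `a` depends only on finitely many counts "θ holds at `≥ m` primes"
(`DeterminedByCounts`); only `∃ y` needs an argument. For counting formulas `θᵢ(a, y)`, each prime
has a local type: the set of patterns `{i | θᵢ(a_p, c)}` realised by some `c`, and the pattern at
`c = 0`. All but finitely many primes have the local type of `a = 1`, and choosing `y` means
choosing at every prime a realised pattern, the one at `c = 0` at almost all primes. The counts
for `(a, y)` only depend on how many primes carry each (local type, pattern), truncated at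
`M > mᵢ`; such a distribution can be moved from `a` to `a'` as soon as the numbers of primes of
each local type agree up to `2^k · M`, and "at least `r` primes have local type `ω`" is again a
counting formula.
-/

theorem ENat.coe_min (a b : ℕ) : ((min a b : ℕ) : ℕ∞) = min (a : ℕ∞) b :=
  Nat.mono_cast.map_min

theorem ENat.min_eq_min_of_forall_le_iff {a b : ℕ∞} {N : ℕ}
    (h : ∀ r ≤ N, ((r : ℕ∞) ≤ a ↔ (r : ℕ∞) ≤ b)) : min a N = min b N :=
  ENat.eq_of_forall_natCast_le_iff fun r => by
    simp only [le_min_iff, Nat.cast_le]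
    by_cases hr : r ≤ N <;> simp [hr, h]

theorem ENat.le_sum_iff_of_min_eq {X : Type*} (s : Finset X) {a b : X → ℕ∞} {M n : ℕ}
    (h : ∀ x ∈ s, min (a x) M = min (b x) M) (hn : n ≤ M) :
    (n : ℕ∞) ≤ ∑ x ∈ s, a x ↔ (n : ℕ∞) ≤ ∑ x ∈ s, b x := by
  by_cases hsmall : ∀ x ∈ s, a x < M
  · rw [Finset.sum_congr rfl fun x hx => ?_]
    have hmin := h x hx
    rw [min_eq_left (hsmall x hx).le] at hmin
    rcases min_choice (b x) M with hb | hb <;> rw [hb] at hmin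
    · exact hmin
    · exact absurd hmin (hsmall x hx).ne
  · obtain ⟨x, hx, hax⟩ : ∃ x ∈ s, (M : ℕ∞) ≤ a x := by simpa using hsmall
    have hbx : (M : ℕ∞) ≤ b x := min_eq_right_iff.1 ((min_eq_right hax).symm.trans (h x hx)).symm
    have hnM : (n : ℕ∞) ≤ M := Nat.cast_le.2 hn
    exact iff_of_true (hnM.trans (hax.trans (Finset.single_le_sum (fun _ _ => zero_le) hx)))
      (hnM.trans (hbx.trans (Finset.single_le_sum (fun _ _ => zero_le) hx)))

theorem Set.encard_eq_sum_encard_fiber {β X : Type*} [Fintype X] (s : Set β) (g : β → X) :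
    s.encard = ∑ x, {p ∈ s | g p = x}.encard := by
  rw [← finsum_eq_sum_of_fintype, ← encard_iUnion_of_finite]
  · congr
    ext p
    simp
  · exact fun x y hxy => disjoint_left.2 fun p hx hy => hxy (hx.2.symm.trans hy.2)

theorem le_encard_iff_of_min_encard_fiber_eq {β X : Type*} [Finite X] {M n : ℕ} {s s' : Set β}
    {g g' : β → X}
    (h : ∀ x, min {p ∈ s | g p = x}.encard M = min {p ∈ s' | g' p = x}.encard M)
    (Y : Set X) (hn : n ≤ M) :
    (n : ℕ∞) ≤ {p ∈ s | g p ∈ Y}.encard ↔ (n : ℕ∞) ≤ {p ∈ s' | g' p ∈ Y}.encard := by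
  have := Fintype.ofFinite X
  rw [Set.encard_eq_sum_encard_fiber _ g, Set.encard_eq_sum_encard_fiber _ g']
  refine ENat.le_sum_iff_of_min_eq _ (fun x _ => ?_) hn
  by_cases hx : x ∈ Y
  · convert h x using 3 <;> ext p <;> simp only [Set.mem_ofPred_eq] <;> aesop
  · have empty (t : Set β) (f : β → X) : {p ∈ {p ∈ t | f p ∈ Y} | f p = x} = ∅ :=
      Set.eq_empty_of_forall_notMem fun p hp => hx (hp.2 ▸ hp.1.2)
    rw [empty, empty]

section Redistribution

open Finset

variable {β T : Type*} [Fintype T] [Nonempty T]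

theorem Finset.encard_sep_eq_card_filter (s : Finset β) (P : β → Prop) [DecidablePred P] :
    {p ∈ (s : Set β) | P p}.encard = #{p ∈ s | P p} := by
  rw [← Set.encard_coe_eq_coe_finsetCard, coe_filter]
  rfl

theorem exists_sum_eq_min_eq (M n : ℕ) (f' : T → ℕ)
    (hn : min n (Fintype.card T * M) = min (∑ τ, f' τ) (Fintype.card T * M)) :
    ∃ f : T → ℕ, ∑ τ, f τ = n ∧ ∀ τ, min (f τ) M = min (f' τ) M := by
  classical
  by_cases h : n = ∑ τ, f' τ
  · exact ⟨f', h.symm, fun _ => rfl⟩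
  have hN : Fintype.card T * M ≤ n ∧ Fintype.card T * M ≤ ∑ τ, f' τ := by omega
  obtain ⟨τ₀, hτ₀⟩ : ∃ τ₀, M ≤ f' τ₀ := by
    by_contra! hlt
    have := sum_lt_sum_of_nonempty univ_nonempty fun τ _ => hlt τ
    simp only [sum_const, card_univ, smul_eq_mul] at this
    omega
  have hsum : ∑ τ, min (f' τ) M ≤ n :=
    calc ∑ τ, min (f' τ) M ≤ ∑ _τ : T, M := sum_le_sum fun τ _ => min_le_right _ _
      _ = Fintype.card T * M := by simp
      _ ≤ n := hN.1
  -- the surplus goes to `τ₀`, whose truncated count is already `M`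
  refine ⟨fun τ => min (f' τ) M + if τ = τ₀ then n - ∑ τ, min (f' τ) M else 0, ?_, fun τ => ?_⟩
  · rw [sum_add_distrib, sum_ite_eq' univ τ₀, if_pos (mem_univ _)]
    omega
  · dsimp only
    split_ifs with h
    · subst h
      omega
    · omega

theorem Finset.exists_card_filter_eq [DecidableEq T] (C : Finset β) (f : T → ℕ)
    (h : ∑ τ, f τ = #C) :
    ∃ σ : β → T, ∀ τ, #{p ∈ C | σ p = τ} = f τ := by
  classical
  have e : C ≃ Σ τ, Fin (f τ) := Fintype.equivOfCardEq (by simp [h])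
  let σ (p : β) : T := if hp : p ∈ C then (e ⟨p, hp⟩).1 else Classical.arbitrary T
  refine ⟨σ, fun τ => ?_⟩
  rw [← Fintype.card_coe, ← Fintype.card_fin (f τ)]
  refine Fintype.card_congr ((Equiv.subtypeEquivRight fun p => mem_filter).trans <|
    (Equiv.subtypeSubtypeEquivSubtypeInter (· ∈ C) (σ · = τ)).symm.trans <|
      (e.subtypeEquiv fun x => ?_).trans (Equiv.sigmaSubtype τ))
  simp [σ]

theorem Finset.exists_min_card_filter_eq [DecidableEq T] (M : ℕ) {C C' : Finset β}
    (hC : min #C (Fintype.card T * M) = min #C' (Fintype.card T * M)) (σ' : β → T) :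
    ∃ σ : β → T, ∀ τ, min #{p ∈ C | σ p = τ} M = min #{p ∈ C' | σ' p = τ} M := by
  rw [card_eq_sum_card_fiberwise (s := C') (f := σ') (t := univ) fun _ _ => mem_univ _] at hC
  obtain ⟨f, hf, hfM⟩ := exists_sum_eq_min_eq M #C _ hC
  obtain ⟨σ, hσ⟩ := C.exists_card_filter_eq f hf
  exact ⟨σ, fun τ => hσ τ ▸ hfM τ⟩

theorem exists_min_encard_sep_eq_of_finite (M : ℕ) {C C' : Set β} (hCfin : C.Finite)
    (hC'fin : C'.Finite)
    (hC : min C.encard (Fintype.card T * M : ℕ) = min C'.encard (Fintype.card T * M : ℕ))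
    (σ' : β → T) :
    ∃ σ : β → T, ∀ τ, min {p ∈ C | σ p = τ}.encard M = min {p ∈ C' | σ' p = τ}.encard M := by
  classical
  obtain ⟨s, rfl⟩ := hCfin.exists_finset_coe
  obtain ⟨s', rfl⟩ := hC'fin.exists_finset_coe
  simp only [Set.encard_coe_eq_coe_finsetCard, ← ENat.coe_min, Nat.cast_inj] at hC
  obtain ⟨σ, hσ⟩ := exists_min_card_filter_eq M hC σ'
  refine ⟨σ, fun τ => ?_⟩
  rw [encard_sep_eq_card_filter, encard_sep_eq_card_filter, ← ENat.coe_min, ← ENat.coe_min, hσ τ]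

theorem exists_min_encard_sep_eq_of_infinite (M : ℕ) {C C' : Set β} (hC : C.Infinite)
    (hC' : C'.Infinite) (z : T) (σ' : β → T) (hσ' : {p ∈ C' | σ' p ≠ z}.Finite) :
    ∃ σ : β → T, {p ∈ C | σ p ≠ z}.Finite ∧
      ∀ τ, min {p ∈ C | σ p = τ}.encard M = min {p ∈ C' | σ' p = τ}.encard M := by
  classical
  -- copy the finitely many values `≠ z` of `σ'` onto a finite `t ⊆ C` and let `z` absorb the rest
  obtain ⟨t, htC, ht⟩ := hC.exists_subset_card_eq #hσ'.toFinset
  obtain ⟨σ₀, hσ₀⟩ := exists_min_card_filter_eq (T := T) M (congrArg (min · _) ht) σ'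
  refine ⟨fun p => if p ∈ t then σ₀ p else z, t.finite_toSet.subset fun p hp => ?_, fun τ => ?_⟩
  · by_contra hpt
    exact hp.2 (if_neg hpt)
  by_cases hτ : τ = z
  · subst hτ
    have h₁ : {p ∈ C | (if p ∈ t then σ₀ p else τ) = τ}.Infinite :=
      (hC.sdiff t.finite_toSet).mono fun p hp => ⟨hp.1, if_neg hp.2⟩
    have h₂ : {p ∈ C' | σ' p = τ}.Infinite :=
      (hC'.sdiff hσ').mono fun p hp => ⟨hp.1, not_not.1 fun h => hp.2 ⟨hp.1, h⟩⟩
    rw [h₁.encard_eq, h₂.encard_eq]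
  have h₁ : {p ∈ C | (if p ∈ t then σ₀ p else z) = τ} = {p ∈ (t : Set β) | σ₀ p = τ} := by
    ext p
    by_cases hp : p ∈ t
    · simp [hp, htC hp]
    · simp [hp, Ne.symm hτ]
  have h₂ : {p ∈ C' | σ' p = τ} = {p ∈ (hσ'.toFinset : Set β) | σ' p = τ} := by
    ext p
    simp only [Set.Finite.coe_toFinset, Set.mem_ofPred_eq]
    exact ⟨fun h => ⟨⟨h.1, h.2 ▸ hτ⟩, h.2⟩, fun h => ⟨h.1.1, h.2⟩⟩
  rw [h₁, h₂, encard_sep_eq_card_filter, encard_sep_eq_card_filter, ← ENat.coe_min,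
    ← ENat.coe_min, hσ₀ τ]

theorem exists_min_encard_sep_eq (M : ℕ) {C C' : Set β} (hfin : C.Finite ↔ C'.Finite)
    (hC : min C.encard (Fintype.card T * M : ℕ) = min C'.encard (Fintype.card T * M : ℕ))
    (z : T) (σ' : β → T) (hσ' : {p ∈ C' | σ' p ≠ z}.Finite) :
    ∃ σ : β → T, {p ∈ C | σ p ≠ z}.Finite ∧
      ∀ τ, min {p ∈ C | σ p = τ}.encard M = min {p ∈ C' | σ' p = τ}.encard M := by
  by_cases hC' : C'.Finite
  · obtain ⟨σ, hσ⟩ := exists_min_encard_sep_eq_of_finite M (hfin.2 hC') hC' hC σ'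
    exact ⟨σ, (hfin.2 hC').subset fun p hp => hp.1, hσ⟩
  · exact exists_min_encard_sep_eq_of_infinite M (mt hfin.1 hC') hC' z σ' hσ'

theorem exists_min_encard_fiber_eq {D : Type*} [Finite D] (M : ℕ) (s : Set β) (d d' : β → D)
    (dflt : D → T) (hfin : ∀ ω, {p ∈ s | d p = ω}.Finite ↔ {p ∈ s | d' p = ω}.Finite)
    (hC : ∀ ω, min {p ∈ s | d p = ω}.encard (Fintype.card T * M : ℕ) =
      min {p ∈ s | d' p = ω}.encard (Fintype.card T * M : ℕ))
    (σ' : β → T) (hσ' : {p ∈ s | σ' p ≠ dflt (d' p)}.Finite) :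
    ∃ σ : β → T, {p ∈ s | σ p ≠ dflt (d p)}.Finite ∧
      ∀ x, min {p ∈ s | (d p, σ p) = x}.encard M = min {p ∈ s | (d' p, σ' p) = x}.encard M := by
  choose σ hσfin hσ using fun ω => exists_min_encard_sep_eq M (hfin ω) (hC ω) (dflt ω) σ'
    (hσ'.subset fun p hp => ⟨hp.1.1, hp.1.2 ▸ hp.2⟩)
  refine ⟨fun p => σ (d p) p, (Set.finite_iUnion hσfin).subset fun p hp =>
    Set.mem_iUnion.2 ⟨d p, ⟨hp.1, rfl⟩, hp.2⟩, fun ⟨ω, τ⟩ => ?_⟩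
  convert hσ ω τ using 3 <;> ext p <;> simp only [Set.mem_ofPred_eq, Prod.mk.injEq] <;> aesop

end Redistribution

namespace SkolemArithmetic

open Set

instance {M N : Type*} [Monoid M] [Monoid N] : L.StrongHomClass (M →* N) M N where
  map_fun φ {n} f x :=
    match n, f with
    | 0, _ => map_one φ
    | 2, _ => map_mul φ (x 0) (x 1)
  map_rel _ _ r := r.elim

def pExp (p : ℕ) (a : ℕ+) : Multiplicative ℕ := .ofAdd (padicValNat p a)

def pExpHom {p : ℕ} (hp : p.Prime) : ℕ+ →* Multiplicative ℕ where
  toFun := pExp p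
  map_one' := by simp [pExp]
  map_mul' a b := by
    have := Fact.mk hp
    simp [pExp, padicValNat.mul a.ne_zero b.ne_zero]

theorem realize_term_pExp {α : Type*} {p : ℕ} (hp : p.Prime) (t : L.Term α) (v : α → ℕ+) :
    t.realize (fun j => pExp p (v j)) = pExp p (t.realize v) :=
  HomClass.realize_term (pExpHom hp)

theorem eq_iff_forall_pExp_eq {a b : ℕ+} : a = b ↔ ∀ p, p.Prime → pExp p a = pExp p b := by
  rw [← PNat.coe_inj, Nat.eq_iff_prime_padicValNat_eq _ _ a.ne_zero b.ne_zero]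
  simp [pExp]

theorem exists_pExp_eq {c : ℕ → Multiplicative ℕ} (hc : {p | p.Prime ∧ c p ≠ 1}.Finite) :
    ∃ y : ℕ+, ∀ p, p.Prime → pExp p y = c p := by
  let f : ℕ →₀ ℕ := Finsupp.ofSupportFinite (fun p => if p.Prime then (c p).toAdd else 0)
    (hc.subset fun p hp => by by_contra h; simp_all)
  have hf : ∀ p ∈ f.support, p.Prime := fun p hp => by
    by_contra h
    simp [f, Finsupp.ofSupportFinite_coe, h] at hp
  have hpos : 0 < f.prod (· ^ ·) :=
    Finset.prod_pos fun p hp => pow_pos (hf p hp).pos _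
  refine ⟨⟨_, hpos⟩, fun p hp => ?_⟩
  simp only [pExp, PNat.mk_coe, ← Nat.factorization_def _ hp,
    Nat.prod_pow_factorization_eq_self hf]
  simp [f, Finsupp.ofSupportFinite_coe, hp]

section Counting

variable {α β : Type*}

def primesSatisfying (θ : L.Formula α) (v : α → ℕ+) : Set ℕ :=
  {p | p.Prime ∧ θ.Realize fun j => pExp p (v j)}

def CountAtLeast (m : ℕ) (θ : L.Formula α) (v : α → ℕ+) : Prop :=
  ∃ S : Finset ℕ, S.card = m ∧ ∀ p ∈ S, p.Prime ∧ θ.Realize fun j => pExp p (v j)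

theorem countAtLeast_iff {m : ℕ} {θ : L.Formula α} {v : α → ℕ+} :
    CountAtLeast m θ v ↔ (m : ℕ∞) ≤ (primesSatisfying θ v).encard := by
  constructor
  · rintro ⟨S, rfl, hS⟩
    rw [← encard_coe_eq_coe_finsetCard]
    exact encard_le_encard hS
  · intro h
    obtain ⟨t, hts, htm⟩ := exists_subset_encard_eq h
    have ht : t.Finite := finite_of_encard_eq_coe htm
    refine ⟨ht.toFinset, ?_, fun p hp => hts (ht.mem_toFinset.mp hp)⟩
    rw [← Nat.cast_inj (R := ℕ∞), ← encard_coe_eq_coe_finsetCard, ht.coe_toFinset, htm]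

def DeterminedByCounts (P : (α → ℕ+) → Prop) : Prop :=
  ∃ F : Set (L.Formula α × ℕ), F.Finite ∧
    ∀ v v', (∀ q ∈ F, CountAtLeast q.2 q.1 v ↔ CountAtLeast q.2 q.1 v') → P v → P v'

namespace DeterminedByCounts

variable {P Q : (α → ℕ+) → Prop}

theorem countAtLeast (m : ℕ) (θ : L.Formula α) : DeterminedByCounts (CountAtLeast m θ) :=
  ⟨{(θ, m)}, finite_singleton _, fun _ _ h => (h _ rfl).1⟩

theorem of_iff (hP : DeterminedByCounts P) (h : ∀ v, P v ↔ Q v) : DeterminedByCounts Q := by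
  obtain ⟨F, hF, hPF⟩ := hP
  exact ⟨F, hF, fun v v' hvv' hv => (h v').1 (hPF v v' hvv' ((h v).2 hv))⟩

theorem not (hP : DeterminedByCounts P) : DeterminedByCounts (¬ P ·) := by
  obtain ⟨F, hF, hPF⟩ := hP
  exact ⟨F, hF, fun v v' hvv' hv hv' => hv (hPF v' v (fun q hq => (hvv' q hq).symm) hv')⟩

theorem imp (hP : DeterminedByCounts P) (hQ : DeterminedByCounts Q) :
    DeterminedByCounts fun v => P v → Q v := by
  obtain ⟨F, hF, hPF⟩ := hP
  obtain ⟨G, hG, hQG⟩ := hQ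
  refine ⟨F ∪ G, hF.union hG, fun v v' hvv' himp hv' => ?_⟩
  refine hQG v v' (fun q hq => hvv' q (Or.inr hq)) (himp ?_)
  exact hPF v' v (fun q hq => (hvv' q (Or.inl hq)).symm) hv'

theorem comp {P : (β → ℕ+) → Prop} (hP : DeterminedByCounts P) (f : β → α) :
    DeterminedByCounts fun v : α → ℕ+ => P (v ∘ f) := by
  obtain ⟨F, hF, hPF⟩ := hP
  refine ⟨(fun q => (q.1.relabel f, q.2)) '' F, hF.image _, fun v v' hvv' hv => ?_⟩
  refine hPF _ _ (fun q hq => ?_) hv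
  simpa [CountAtLeast, Formula.realize_relabel, Function.comp_def] using hvv' _ ⟨q, hq, rfl⟩

open scoped Classical in
theorem exists_bool_combination (hP : DeterminedByCounts P) :
    ∃ (k : ℕ) (θ : Fin k → L.Formula α) (m : Fin k → ℕ) (B : (Fin k → Bool) → Bool),
      ∀ v, P v ↔ B (fun i => decide (CountAtLeast (m i) (θ i) v)) = true := by
  obtain ⟨F, hF, hPF⟩ := hP
  obtain ⟨k, e, he⟩ := hF.fin_embedding
  let bits (v : α → ℕ+) (i : Fin k) : Bool := decide (CountAtLeast (e i).2 (e i).1 v)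
  refine ⟨k, fun i => (e i).1, fun i => (e i).2,
    fun b => decide (∃ v, bits v = b ∧ P v), fun v => ?_⟩
  refine ⟨fun hv => decide_eq_true ⟨v, rfl, hv⟩, fun hb => ?_⟩
  obtain ⟨v', hbits, hv'⟩ := of_decide_eq_true hb
  refine hPF v' v (fun q hq => ?_) hv'
  obtain ⟨i, rfl⟩ := he ▸ hq
  simpa [bits] using congrFun hbits i

end DeterminedByCounts

theorem determinedByCounts_eq (t₁ t₂ : L.Term α) :
    DeterminedByCounts fun v => t₁.realize v = t₂.realize v := by
  refine (DeterminedByCounts.countAtLeast 1 (Term.equal t₁ t₂).not).not.of_iff fun v => ?_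
  rw [countAtLeast_iff, Nat.cast_one, one_le_encard_iff_nonempty, not_nonempty_iff_eq_empty,
    eq_empty_iff_forall_notMem, eq_iff_forall_pExp_eq]
  refine forall_congr' fun p => ?_
  by_cases hp : p.Prime <;>
    simp [primesSatisfying, hp, Formula.realize_not, Formula.realize_equal, realize_term_pExp]

end Counting

section Patterns

variable {α ι M : Type*} [Monoid M] (θ : ι → L.Formula (α ⊕ Fin 1))

def pattern (w : α → M) (c : M) : Set ι := {i | (θ i).Realize (Sum.elim w fun _ => c)}

def localData (w : α → M) : Set (Set ι) × Set ι := (range (pattern θ w), pattern θ w 1)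

variable [Finite ι]

open scoped Classical in
noncomputable def patternFormula (τ : Set ι) : L.Formula (α ⊕ Fin 1) :=
  Formula.iInf fun i => if i ∈ τ then θ i else (θ i).not

theorem realize_patternFormula (τ : Set ι) (w : α → M) (c : M) :
    (patternFormula θ τ).Realize (Sum.elim w fun _ => c) ↔ pattern θ w c = τ := by
  simp only [patternFormula, Formula.realize_iInf, Set.ext_iff, pattern, Set.mem_ofPred_eq]
  refine forall_congr' fun i => ?_
  split_ifs with h <;> simp [h, Formula.realize_not]

noncomputable def patternRealizedFormula (τ : Set ι) : L.Formula α :=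
  (patternFormula θ τ).iExs (Fin 1)

theorem realize_patternRealizedFormula (τ : Set ι) (w : α → M) :
    (patternRealizedFormula θ τ).Realize w ↔ τ ∈ range (pattern θ w) := by
  rw [patternRealizedFormula, Formula.realize_iExs]
  constructor
  · rintro ⟨c, hc⟩
    refine ⟨c 0, (realize_patternFormula θ τ w (c 0)).1 ?_⟩
    convert hc using 2
    funext i
    exact congrArg c (Subsingleton.elim _ _)
  · rintro ⟨c, rfl⟩
    exact ⟨fun _ => c, (realize_patternFormula θ _ w c).2 rfl⟩

noncomputable def patternAtOneFormula (τ : Set ι) : L.Formula α :=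
  (patternFormula θ τ).subst (Sum.elim Term.var fun _ => Constants.term ())

theorem realize_patternAtOneFormula (τ : Set ι) (w : α → M) :
    (patternAtOneFormula θ τ).Realize w ↔ pattern θ w 1 = τ := by
  rw [patternAtOneFormula, Formula.Realize, BoundedFormula.realize_subst,
    ← realize_patternFormula θ τ w 1]
  have hv : (fun a : α ⊕ Fin 1 =>
      (Sum.elim Term.var (fun _ => Constants.term (L := L) ()) a).realize w) =
      (Sum.elim w fun _ => (1 : M)) := by
    funext a
    rcases a with _ | _ <;> rfl
  rw [hv]
  rfl

open scoped Classical in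
noncomputable def localDataFormula (ω : Set (Set ι) × Set ι) : L.Formula α :=
  (Formula.iInf fun τ : Set ι =>
      if τ ∈ ω.1 then patternRealizedFormula θ τ else (patternRealizedFormula θ τ).not) ⊓
    patternAtOneFormula θ ω.2

theorem realize_localDataFormula (ω : Set (Set ι) × Set ι) (w : α → M) :
    (localDataFormula θ ω).Realize w ↔ localData θ w = ω := by
  simp only [localDataFormula, Formula.realize_inf, realize_patternAtOneFormula,
    Formula.realize_iInf, localData, Prod.ext_iff, apply_ite (Formula.Realize · w),
    Formula.realize_not, realize_patternRealizedFormula, Set.ext_iff]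
  refine and_congr_left' (forall_congr' fun τ => ?_)
  split_ifs with hτ <;> simp [hτ]

end Patterns

section Primes

variable {α ι : Type*} (θ : ι → L.Formula (α ⊕ Fin 1))

def dataAt (v : α → ℕ+) (p : ℕ) : Set (Set ι) × Set ι := localData θ fun j => pExp p (v j)

def patternAt (v : α → ℕ+) (y : ℕ+) (p : ℕ) : Set ι :=
  pattern θ (fun j => pExp p (v j)) (pExp p y)

theorem countAtLeast_localDataFormula [Finite ι] (r : ℕ) (ω : Set (Set ι) × Set ι) (v : α → ℕ+) :
    CountAtLeast r (localDataFormula θ ω) v ↔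
      (r : ℕ∞) ≤ {p | p.Prime ∧ dataAt θ v p = ω}.encard := by
  simp only [countAtLeast_iff, primesSatisfying, realize_localDataFormula]
  rfl

theorem countAtLeast_sumElim_iff (m : ℕ) (i : ι) (v : α → ℕ+) (y : ℕ+) :
    CountAtLeast m (θ i) (Sum.elim v fun _ => y) ↔
      (m : ℕ∞) ≤ {p | p.Prime ∧ i ∈ patternAt θ v y p}.encard := by
  have (p : ℕ) : (fun j : α ⊕ Fin 1 => pExp p (Sum.elim v (fun _ => y) j)) =
      Sum.elim (fun j => pExp p (v j)) fun _ => pExp p y := by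
    funext j
    rcases j with _ | _ <;> rfl
  simp only [countAtLeast_iff, primesSatisfying, this]
  rfl

theorem finite_setOf_pExp_ne_one (a : ℕ+) : {p | pExp p a ≠ 1}.Finite :=
  (Set.finite_Iic (a : ℕ)).subset fun p hp => Nat.le_of_dvd a.pos <| by
    by_contra h
    exact hp (by simp [pExp, padicValNat.eq_zero_of_not_dvd h])

theorem finite_setOf_dataAt_eq_iff [Finite α] (v : α → ℕ+) (ω : Set (Set ι) × Set ι) :
    {p | p.Prime ∧ dataAt θ v p = ω}.Finite ↔ ω ≠ localData θ (1 : α → Multiplicative ℕ) := by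
  have hE : (⋃ j, {p | pExp p (v j) ≠ 1}).Finite :=
    Set.finite_iUnion fun j => finite_setOf_pExp_ne_one (v j)
  have hgen : ∀ p ∉ ⋃ j, {p | pExp p (v j) ≠ 1},
      dataAt θ v p = localData θ (1 : α → Multiplicative ℕ) := by
    intro p hp
    simp only [Set.mem_iUnion, Set.mem_ofPred_eq, not_exists, not_not] at hp
    exact congrArg (localData θ) (funext hp)
  constructor
  · rintro hfin rfl
    have hsub : {p | p.Prime} \ ⋃ j, {p | pExp p (v j) ≠ 1} ⊆
        {p | p.Prime ∧ dataAt θ v p = localData θ (1 : α → Multiplicative ℕ)} :=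
      fun p hp => ⟨hp.1, hgen p hp.2⟩
    exact (Nat.infinite_setOfPred_prime.sdiff hE).mono hsub hfin
  · intro hω
    exact hE.subset fun p hp => by_contra fun h => hω (hp.2 ▸ hgen p h)

theorem exists_patternAt_eq (v : α → ℕ+) (σ : ℕ → Set ι)
    (hσ : ∀ p, p.Prime → σ p ∈ (dataAt θ v p).1)
    (hfin : {p | p.Prime ∧ σ p ≠ (dataAt θ v p).2}.Finite) :
    ∃ y : ℕ+, ∀ p, p.Prime → patternAt θ v y p = σ p := by
  have hc (p : ℕ) : ∃ c, (p.Prime → pattern θ (fun j => pExp p (v j)) c = σ p) ∧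
      (σ p = (dataAt θ v p).2 → c = 1) := by
    by_cases h : σ p = (dataAt θ v p).2
    · exact ⟨1, fun _ => h.symm, fun _ => rfl⟩
    by_cases hp : p.Prime
    · obtain ⟨c, hc⟩ := hσ p hp
      exact ⟨c, fun _ => hc, fun h' => absurd h' h⟩
    · exact ⟨1, fun h' => absurd h' hp, fun _ => rfl⟩
  choose c hc using hc
  obtain ⟨y, hy⟩ := exists_pExp_eq (c := c)
    (hfin.subset fun p hp => ⟨hp.1, fun h => hp.2 ((hc p).2 h)⟩)
  exact ⟨y, fun p hp => by rw [patternAt, hy p hp, (hc p).1 hp]⟩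

theorem exists_min_encard_patternAt_eq [Fintype ι] [Finite α] {M : ℕ} (hM : 0 < M) {v v' : α → ℕ+}
    (hC : ∀ ω, min {p | p.Prime ∧ dataAt θ v p = ω}.encard (Fintype.card (Set ι) * M : ℕ) =
      min {p | p.Prime ∧ dataAt θ v' p = ω}.encard (Fintype.card (Set ι) * M : ℕ))
    (y' : ℕ+) :
    ∃ y : ℕ+, ∀ x, min {p | p.Prime ∧ (dataAt θ v p, patternAt θ v y p) = x}.encard M =
      min {p | p.Prime ∧ (dataAt θ v' p, patternAt θ v' y' p) = x}.encard M := by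
  obtain ⟨σ, hσfin, hσ⟩ := exists_min_encard_fiber_eq M {p : ℕ | p.Prime} (dataAt θ v)
    (dataAt θ v') Prod.snd
    (fun ω => (finite_setOf_dataAt_eq_iff θ v ω).trans (finite_setOf_dataAt_eq_iff θ v' ω).symm)
    hC (patternAt θ v' y') <| (finite_setOf_pExp_ne_one y').subset fun p hp h =>
      hp.2 (by simp [patternAt, h, dataAt, localData])
  -- the fiber of `(dataAt θ v p, σ p)` is nonempty, hence so is the one for `v'`, where `σ p`
  -- is a pattern of some `patternAt θ v' y' q`
  have hach (p : ℕ) (hp : p.Prime) : σ p ∈ (dataAt θ v p).1 := by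
    have hone : 1 ≤ min {q | q.Prime ∧ (dataAt θ v q, σ q) = (dataAt θ v p, σ p)}.encard M :=
      le_min (Set.one_le_encard_iff_nonempty.2 ⟨p, hp, rfl⟩) (by exact_mod_cast hM)
    obtain ⟨q, -, hq⟩ := Set.one_le_encard_iff_nonempty.1 ((hone.trans_eq (hσ _)).trans
      (min_le_left _ _))
    rw [Prod.mk.injEq] at hq
    exact hq.1 ▸ hq.2 ▸ ⟨_, rfl⟩
  obtain ⟨y, hy⟩ := exists_patternAt_eq θ v σ hach hσfin
  refine ⟨y, fun x => ?_⟩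
  have hfiber : {p | p.Prime ∧ (dataAt θ v p, patternAt θ v y p) = x} =
      {p ∈ {p : ℕ | p.Prime} | (dataAt θ v p, σ p) = x} :=
    Set.ext fun p => and_congr_right fun hp => by rw [hy p hp]
  rw [hfiber]
  exact hσ x

end Primes

theorem DeterminedByCounts.exists {α : Type*} [Finite α] {P : (α ⊕ Fin 1 → ℕ+) → Prop}
    (hP : DeterminedByCounts P) :
    DeterminedByCounts fun v : α → ℕ+ => ∃ y, P (Sum.elim v fun _ => y) := by
  obtain ⟨F, hF, hPF⟩ := hP
  have := hF.fintype
  let θ (q : F) : L.Formula (α ⊕ Fin 1) := q.1.1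
  let M := ∑ q : F, q.1.2 + 1
  let N := Fintype.card (Set F) * M
  refine ⟨range fun x : (Set (Set F) × Set F) × Fin (N + 1) => (localDataFormula θ x.1, x.2),
    finite_range _, fun v v' hvv' ⟨y, hy⟩ => ?_⟩
  have hC (ω : Set (Set F) × Set F) :
      min {p | p.Prime ∧ dataAt θ v' p = ω}.encard N =
        min {p | p.Prime ∧ dataAt θ v p = ω}.encard N :=
    ENat.min_eq_min_of_forall_le_iff fun r hr => by
      simpa only [countAtLeast_localDataFormula] using
        (hvv' _ ⟨(ω, ⟨r, Nat.lt_succ_of_le hr⟩), rfl⟩).symm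
  obtain ⟨y', hy'⟩ := exists_min_encard_patternAt_eq θ (Nat.succ_pos _) hC y
  refine ⟨y', hPF _ _ (fun q hq => ?_) hy⟩
  have hqM : q.2 ≤ M := by
    have := Finset.single_le_sum (f := fun q : F => q.1.2) (fun _ _ => Nat.zero_le _)
      (Finset.mem_univ ⟨q, hq⟩)
    exact this.trans (Nat.le_succ _)
  refine (countAtLeast_sumElim_iff θ q.2 ⟨q, hq⟩ v y).trans <|
    (countAtLeast_sumElim_iff θ q.2 ⟨q, hq⟩ v' y').trans ?_ |>.symm
  exact le_encard_iff_of_min_encard_fiber_eq (s := {p : ℕ | p.Prime}) hy'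
    {x : (Set (Set F) × Set F) × Set F | ⟨q, hq⟩ ∈ x.2} hqM

theorem determinedByCounts_realize {α : Type*} [Finite α] {l : ℕ} (φ : L.BoundedFormula α l) :
    DeterminedByCounts fun v : α ⊕ Fin l → ℕ+ => φ.Realize (v ∘ Sum.inl) (v ∘ Sum.inr) := by
  induction φ with
  | falsum => exact ⟨∅, finite_empty, fun _ _ _ => id⟩
  | equal t₁ t₂ =>
    exact (determinedByCounts_eq t₁ t₂).of_iff fun v => by simp [BoundedFormula.Realize]
  | rel R => exact R.elim
  | imp _ _ ih₁ ih₂ => exact ih₁.imp ih₂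
  | @all l φ ih =>
    let f : α ⊕ Fin (l + 1) → (α ⊕ Fin l) ⊕ Fin 1 :=
      Sum.elim (Sum.inl ∘ Sum.inl) (Fin.lastCases (Sum.inr 0) (Sum.inl ∘ Sum.inr))
    refine (ih.comp f).not.exists.not.of_iff fun v => ?_
    have hf : ∀ y : ℕ+, (Sum.elim v fun _ => y) ∘ f ∘ Sum.inr = Fin.snoc (v ∘ Sum.inr) y := by
      intro y
      funext i
      induction i using Fin.lastCases <;> simp [f]
    simp only [not_exists, not_not, BoundedFormula.realize_all, Function.comp_assoc, hf]
    rfl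

end SkolemArithmetic

open scoped Classical in
/-- Quantifier elimination for Skolem arithmetic (semantic form over the standard model):
every formula is equivalent to a Boolean combination of relativized counting formulas
`θᵢ^{≥mᵢ}`, evaluated in the additive structure `(ℕ,+,0)` at the p-adic valuations. -/
theorem skolem_arithmetic_qe (n : ℕ) (φ : L.Formula (Fin n)) :
    ∃ (k : ℕ) (θ : Fin k → L.Formula (Fin n)) (m : Fin k → ℕ)
      (B : (Fin k → Bool) → Bool),
      ∀ a : Fin n → ℕ+,
        φ.Realize a ↔
          B (fun i =>
            decide (∃ S : Finset ℕ, S.card = m i ∧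
              ∀ p ∈ S, p.Prime ∧
                (θ i).Realize
                  (fun j => (Multiplicative.ofAdd (padicValNat p ((a j : ℕ))) :
                    Multiplicative ℕ)))) = true := by
  have h := (SkolemArithmetic.determinedByCounts_realize φ).comp (Sum.elim id finZeroElim)
  refine (h.of_iff fun a => ?_).exists_bool_combination
  rw [Formula.Realize]
  congr!
end

section
/- For every L-formula θ(u, w₁,…,w_k) and every tuple c̄ ∈ (ℕ⁺)^k, there exists a squarefree r ∈ ℕ⁺ such that either (i) for every prime p: p divides r if and only if ℕ⁺ ⊨ θ(p, c̄), or (ii) for every prime p: p divides r if and only if ℕ⁺ ⊭ θ(p, c̄). -/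
/-!
Any permutation of the primes extends multiplicatively to an automorphism of `ℕ+`, and
automorphisms preserve the truth of formulas. The transposition of two primes that divide none of
the parameters `cᵢ` fixes `c̄`, so either all such primes satisfy `θ(·, c̄)` or none does. Hence the
definable set of primes or its complement consists of prime divisors of the parameters, so is
finite, and a finite set of primes is the set of prime divisors of its (squarefree) product.
-/

open FirstOrder Language

def MulEquiv.toLEquiv {M N : Type*} [Monoid M] [Monoid N] (e : M ≃* N) : M ≃[L] N where
  toEquiv := e.toEquiv
  map_fun' {n} f _ := by
    match n, f with
    | 0, _ => exact map_one e
    | 2, _ => exact map_mul e _ _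
  map_rel' r := r.elim

namespace PrimeMultiset

def map (f : Nat.Primes → Nat.Primes) : PrimeMultiset →+ PrimeMultiset :=
  Multiset.mapAddMonoidHom f

theorem map_map (f g : Nat.Primes → Nat.Primes) (v : PrimeMultiset) :
    map f (map g v) = map (f ∘ g) v :=
  Multiset.map_map f g v

theorem map_id (v : PrimeMultiset) : map id v = v :=
  Multiset.map_id v

theorem map_ofPrime (f : Nat.Primes → Nat.Primes) (p : Nat.Primes) :
    map f (ofPrime p) = ofPrime (f p) :=
  Multiset.map_singleton f p

end PrimeMultiset

namespace PNat

open PrimeMultiset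

theorem prime_dvd_iff_count_ne_zero (p : Nat.Primes) (n : ℕ+) :
    (p : ℕ+) ∣ n ↔ n.factorMultiset.count p ≠ 0 := by
  rw [← pow_one (p : ℕ+), count_factorMultiset, Nat.one_le_iff_ne_zero]

theorem finite_setOf_prime_dvd (n : ℕ+) : {p : Nat.Primes | (p : ℕ+) ∣ n}.Finite :=
  (Multiset.finite_toSet n.factorMultiset).subset fun p hp =>
    Multiset.count_ne_zero.mp ((prime_dvd_iff_count_ne_zero p n).mp hp)

def permPrimes (σ : Equiv.Perm Nat.Primes) : ℕ+ ≃* ℕ+ where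
  toFun n := (map σ n.factorMultiset).prod
  invFun n := (map σ.symm n.factorMultiset).prod
  left_inv n := by simp [PrimeMultiset.map_map, PrimeMultiset.map_id]
  right_inv n := by simp [PrimeMultiset.map_map, PrimeMultiset.map_id]
  map_mul' m n := by simp [prod_add]

theorem permPrimes_prime (σ : Equiv.Perm Nat.Primes) (p : Nat.Primes) :
    permPrimes σ p = σ p := by
  simp [permPrimes, factorMultiset_ofPrime, map_ofPrime, prod_ofPrime]

theorem permPrimes_eq_self {σ : Equiv.Perm Nat.Primes} {n : ℕ+}
    (h : ∀ p : Nat.Primes, (p : ℕ+) ∣ n → σ p = p) : permPrimes σ n = n := by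
  have : map σ n.factorMultiset = n.factorMultiset :=
    (Multiset.map_congr rfl fun p hp =>
      h p ((prime_dvd_iff_count_ne_zero p n).mpr (Multiset.count_ne_zero.mpr hp))).trans
      (Multiset.map_id _)
  simp [permPrimes, this]

theorem exists_squarefree_primeDivisors_eq {S : Set Nat.Primes} (hS : S.Finite) :
    ∃ r : ℕ+, (∀ p : Nat.Primes, ¬ (p : ℕ+) * p ∣ r) ∧
      ∀ p : Nat.Primes, (p : ℕ+) ∣ r ↔ p ∈ S := by
  let v : PrimeMultiset := hS.toFinset.val
  refine ⟨v.prod, fun p => ?_, fun p => ?_⟩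
  · rw [← sq, count_factorMultiset, factorMultiset_prod, not_le]
    exact Nat.lt_succ_of_le (Multiset.nodup_iff_count_le_one.mp hS.toFinset.nodup p)
  · rw [prime_dvd_iff_count_ne_zero, factorMultiset_prod, Multiset.count_ne_zero]
    exact hS.mem_toFinset

end PNat

theorem Set.Finite.finite_or_finite_compl_of_forall_mem_iff {α : Type*} {F S : Set α}
    (hF : F.Finite) (h : ∀ a ∉ F, ∀ b ∉ F, (a ∈ S ↔ b ∈ S)) : S.Finite ∨ Sᶜ.Finite := by
  by_cases hS : ∃ a ∉ F, a ∈ S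
  · obtain ⟨a, haF, haS⟩ := hS
    exact .inr (hF.subset fun b hbS => by_contra fun hbF => hbS ((h a haF b hbF).mp haS))
  · push Not at hS
    exact .inl (hF.subset fun a haS => by_contra fun haF => hS a haF haS)

theorem realize_iff_of_not_dvd {k : ℕ} (θ : L.Formula (Unit ⊕ Fin k)) (c : Fin k → ℕ+)
    {p q : Nat.Primes} (hp : ∀ i, ¬ (p : ℕ+) ∣ c i) (hq : ∀ i, ¬ (q : ℕ+) ∣ c i) :
    θ.Realize (Sum.elim (fun _ => (p : ℕ+)) c) ↔ θ.Realize (Sum.elim (fun _ => (q : ℕ+)) c) := by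
  let e := (PNat.permPrimes (Equiv.swap p q)).toLEquiv
  have he : e ∘ Sum.elim (fun _ : Unit => (p : ℕ+)) c = Sum.elim (fun _ => (q : ℕ+)) c := by
    funext x
    rcases x with _ | i
    · exact (PNat.permPrimes_prime _ p).trans (congrArg _ (Equiv.swap_apply_left p q))
    · refine PNat.permPrimes_eq_self fun r hr => Equiv.swap_apply_of_ne_of_ne ?_ ?_
      · rintro rfl; exact hp i hr
      · rintro rfl; exact hq i hr
  rw [← he, StrongHomClass.realize_formula]

/-- Every parameter-definable set of primes, or its complement, is the set of prime
divisors of a squarefree element. -/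
theorem radical_coding (k : ℕ) (θ : L.Formula (Unit ⊕ Fin k)) (c : Fin k → ℕ+) :
    ∃ r : ℕ+, (∀ p : ℕ+, (p : ℕ).Prime → ¬ p * p ∣ r) ∧
      ((∀ p : ℕ+, (p : ℕ).Prime → (p ∣ r ↔ θ.Realize (Sum.elim (fun _ => p) c))) ∨
        (∀ p : ℕ+, (p : ℕ).Prime → (p ∣ r ↔ ¬ θ.Realize (Sum.elim (fun _ => p) c)))) := by
  let S : Set Nat.Primes := {p | θ.Realize (Sum.elim (fun _ => (p : ℕ+)) c)}
  have hF : {p : Nat.Primes | ∃ i, (p : ℕ+) ∣ c i}.Finite := by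
    simpa only [Set.ofPred_exists] using
      Set.finite_iUnion fun i => PNat.finite_setOf_prime_dvd (c i)
  rcases hF.finite_or_finite_compl_of_forall_mem_iff (S := S) fun p hp q hq =>
      realize_iff_of_not_dvd θ c (not_exists.mp hp) (not_exists.mp hq) with hS | hS
  · obtain ⟨r, hsq, hr⟩ := PNat.exists_squarefree_primeDivisors_eq hS
    exact ⟨r, fun p hp => hsq ⟨p, hp⟩, .inl fun p hp => hr ⟨p, hp⟩⟩
  · obtain ⟨r, hsq, hr⟩ := PNat.exists_squarefree_primeDivisors_eq hS
    exact ⟨r, fun p hp => hsq ⟨p, hp⟩, .inr fun p hp => hr ⟨p, hp⟩⟩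
end

section
/- Let D ⊆ (ℕ⁺)ⁿ be non-empty. Then there exists a unique tuple γ ∈ (ℕ⁺)ⁿ such that for every prime p, the exponent vector (v_p(γ₁),…,v_p(γₙ)) is the lexicographic minimum of the set {(v_p(d₁),…,v_p(dₙ)) : d̄ ∈ D} ⊆ ℕⁿ. Moreover, σ(γ) = ⋂_{d̄ ∈ D} σ(d̄). -/
/-!
For each prime `p` the exponent vectors at `p` of the elements of `D` form a non-empty subset of
the well-order `Lex (Fin n → ℕ)`, so they have a least element `m p`. The bottom element is the
zero vector, so `m p = 0` as soon as one element of `D` is prime to `p`; fixing `d₀ ∈ D`, this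
holds for all primes outside the finite set `σ(d₀)`, so there is a tuple `γ` whose exponent
vectors are exactly the `m p`. It is unique since a positive integer is determined by its
`p`-adic valuations, and `p ∈ σ(γ)` iff `m p ≠ 0` iff no exponent vector at `p` of an element of
`D` vanishes, i.e. iff `p ∈ σ(d)` for all `d ∈ D`.
-/

open FirstOrder Language

/-- The support of a tuple: the set of primes dividing some component. -/
def PSupp {n : ℕ} (a : Fin n → ℕ+) : Set ℕ := {p | p.Prime ∧ ∃ i, p ∣ (a i : ℕ)}

theorem exists_isLeast_of_wellFoundedLT {α : Type*} [LinearOrder α] [WellFoundedLT α]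
    {s : Set α} (hs : s.Nonempty) : ∃ x, IsLeast s x :=
  ⟨wellFounded_lt.min s hs, wellFounded_lt.min_mem s hs, fun _ hy => wellFounded_lt.min_le hy⟩

theorem IsLeast.eq_bot_iff {α : Type*} [PartialOrder α] [OrderBot α] {s : Set α} {x : α}
    (h : IsLeast s x) : x = ⊥ ↔ ⊥ ∈ s :=
  ⟨fun hx => hx ▸ h.1, fun hbot => h.unique (isLeast_bot_iff.2 hbot)⟩

theorem exists_pnat_padicValNat_eq (f : ℕ → ℕ) (s : Finset ℕ)
    (hf : ∀ p, p.Prime → p ∉ s → f p = 0) : ∃ a : ℕ+, ∀ p, p.Prime → padicValNat p a = f p := by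
  classical
  let g : ℕ →₀ ℕ := Finsupp.onFinset s (fun p => if p.Prime then f p else 0) fun p hp => by
    by_contra hps
    split_ifs at hp with hpp
    exacts [hp (hf p hpp hps), hp rfl]
  have hg_prime : ∀ p ∈ g.support, p.Prime := fun p hp => by
    by_contra hpp
    simp [g, hpp] at hp
  have hg_pos : 0 < g.prod (· ^ ·) :=
    Finset.prod_pos fun p hp => pow_pos (hg_prime p hp).pos _
  refine ⟨⟨_, hg_pos⟩, fun p hp => ?_⟩
  rw [PNat.mk_coe, ← Nat.factorization_def _ hp, Nat.prod_pow_factorization_eq_self hg_prime]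
  simp [g, hp]

section ExponentVectors

variable {ι : Type*}

def expVec (p : ℕ) (a : ι → ℕ+) : Lex (ι → ℕ) := toLex fun i => padicValNat p (a i)

theorem eq_of_expVec_eq {a b : ι → ℕ+} (h : ∀ p, p.Prime → expVec p a = expVec p b) : a = b := by
  funext i
  refine PNat.coe_injective <|
    (Nat.eq_iff_prime_padicValNat_eq _ _ (a i).ne_zero (b i).ne_zero).2 fun p hp => ?_
  exact congrFun (toLex_inj.1 (h p hp)) i

variable [LinearOrder ι] [WellFoundedLT ι]

theorem expVec_eq_bot_iff {p : ℕ} (hp : p.Prime) {a : ι → ℕ+} :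
    expVec p a = ⊥ ↔ ∀ i, ¬ p ∣ (a i : ℕ) := by
  have : Fact p.Prime := ⟨hp⟩
  refine toLex_inj.trans <| funext_iff.trans <| forall_congr' fun i => ?_
  rw [dvd_iff_padicValNat_ne_zero (a i).ne_zero, not_not]
  rfl

theorem exists_expVec_eq (e : ℕ → Lex (ι → ℕ)) (s : Finset ℕ)
    (hs : ∀ p, p.Prime → p ∉ s → e p = ⊥) : ∃ γ : ι → ℕ+, ∀ p, p.Prime → expVec p γ = e p := by
  have h (i : ι) := exists_pnat_padicValNat_eq (fun p => ofLex (e p) i) s fun p hp hps => by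
    rw [hs p hp hps]
    rfl
  choose γ hγ using h
  exact ⟨γ, fun p hp => toLex_ofLex (e p) ▸ congrArg toLex (funext fun i => hγ i p hp)⟩

end ExponentVectors

theorem mem_PSupp_iff {n : ℕ} {a : Fin n → ℕ+} {p : ℕ} :
    p ∈ PSupp a ↔ p.Prime ∧ expVec p a ≠ ⊥ := by
  refine ⟨fun ⟨hp, h⟩ => ⟨hp, ?_⟩, fun ⟨hp, h⟩ => ⟨hp, ?_⟩⟩ <;>
    simpa [expVec_eq_bot_iff hp] using h

/-- For every non-empty `D ⊆ (ℕ⁺)ⁿ` there is a unique tuple `γ` whose exponent vector at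
every prime `p` is the lexicographic minimum of the exponent vectors at `p` of elements of
`D`; moreover the support of `γ` is the intersection of the supports of the elements of
`D`. -/
theorem gamma_exists_unique (n : ℕ) (D : Set (Fin n → ℕ+)) (hD : D.Nonempty) :
    ∃ γ : Fin n → ℕ+,
      (∀ p : ℕ, p.Prime →
        IsLeast {x : Lex (Fin n → ℕ) | ∃ d ∈ D, x = toLex fun i => padicValNat p ((d i : ℕ))}
          (toLex fun i => padicValNat p ((γ i : ℕ)))) ∧
      (∀ γ' : Fin n → ℕ+,
        (∀ p : ℕ, p.Prime →
          IsLeast {x : Lex (Fin n → ℕ) | ∃ d ∈ D, x = toLex fun i => padicValNat p ((d i : ℕ))}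
            (toLex fun i => padicValNat p ((γ' i : ℕ)))) → γ' = γ) ∧
      PSupp γ = ⋂ d ∈ D, PSupp d := by
  obtain ⟨d₀, hd₀⟩ := hD
  let S (p : ℕ) : Set (Lex (Fin n → ℕ)) := {x | ∃ d ∈ D, x = expVec p d}
  choose m hm using fun p => exists_isLeast_of_wellFoundedLT (s := S p) ⟨_, d₀, hd₀, rfl⟩
  have hm_bot (p : ℕ) : m p = ⊥ ↔ ∃ d ∈ D, expVec p d = ⊥ := by
    simp [(hm p).eq_bot_iff, S, eq_comm]
  obtain ⟨γ, hγ⟩ := exists_expVec_eq m (Finset.univ.biUnion fun i => (d₀ i : ℕ).primeFactors)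
    fun p hp hps => (hm_bot p).2 ⟨d₀, hd₀, (expVec_eq_bot_iff hp).2 <| by simpa [hp] using hps⟩
  refine ⟨γ, fun p hp => (congrArg (IsLeast (S p)) (hγ p hp)).mpr (hm p),
    fun γ' hγ' => eq_of_expVec_eq fun p hp => ((hγ' p hp).unique (hm p)).trans (hγ p hp).symm, ?_⟩
  ext p
  simp only [mem_PSupp_iff, Set.mem_iInter]
  by_cases hp : p.Prime
  · simp [hp, hγ p hp, hm_bot]
  · simpa [hp] using ⟨d₀, hd₀⟩
end
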